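/- Soundness of the nondeterministic choice axiom: For every interpretation I, valuation v ∈ Val, ω ∈ Ω, programs α, β of the SDE-free language, and formula φ, Iv⟦⟨α ∪ β⟩φ⟧(ω) = max(Iv⟦⟨α⟩φ⟧(ω), Iv⟦⟨β⟩φ⟧(ω)); in particular the axiom ⟨α ∪ β⟩φ ↔ ⟨α⟩φ ∨ ⟨β⟩φ evaluates to ⊕ at every I, v ∈ Val̂, ω. -/

import Mathlib

open scoped Classical

noncomputable section

/-! ## Basic domains -/

/-- `ℝ_⊥ = ℝ ∪ {⊥}`, with `⊥` modeled as `none`. -/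
def Rbot : Type := Option ℝ

namespace Rbot

/-- The undefined element `⊥`. -/
def bot : Rbot := none

/-- Embedding of the reals. -/
def real (r : ℝ) : Rbot := Option.some r

/-- Addition, with `⊥` absorbing. -/
def add (a b : Rbot) : Rbot := Option.bind a fun x => Option.map (fun y => x + y) b

/-- Multiplication, with `⊥` absorbing. -/
def mul (a b : Rbot) : Rbot := Option.bind a fun x => Option.map (fun y => x * y) b

/-- The Borel σ-algebra of the topology generated by the open sets of `ℝ`
together with `{⊥}`: a set is measurable iff its trace on `ℝ` is Borel. -/
instance : MeasurableSpace Rbot :=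
  MeasurableSpace.map Option.some (inferInstance : MeasurableSpace ℝ)

end Rbot

/-- Three-valued Łukasiewicz truth values `⊖ < ⊘ < ⊕`, modeled as `Fin 3`. -/
abbrev L : Type := Fin 3

namespace L
/-- false `⊖` -/
def fls : L := 0
/-- indeterminate `⊘` -/
def ind : L := 1
/-- true `⊕` -/
def tru : L := 2
/-- negation: swaps `⊕` and `⊖`, fixes `⊘`. -/
def neg (a : L) : L := tru - a
end L

/-- `Val̂`: maps `V → ℝ_⊥` that are `⊥` at all but finitely many variables
(the countable variable set `V` is modeled as `ℕ`). -/
def ValHat : Type := {f : ℕ → Rbot // {n | f n ≠ Rbot.bot}.Finite}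

instance : MeasurableSpace ValHat :=
  @Subtype.instMeasurableSpace (ℕ → Rbot) _ MeasurableSpace.pi

/-- Update a valuation at one variable. -/
def ValHat.update (v : ValHat) (x : ℕ) (r : Rbot) : ValHat :=
  ⟨Function.update v.1 x r, by
    apply (v.2.union (Set.finite_singleton x)).subset
    intro n hn
    rcases eq_or_ne n x with h | h
    · exact Or.inr h
    · refine Or.inl ?_
      simpa [Function.update_of_ne h] using hn⟩

/-- `Val = Val̂ ∪ {▽, △}`: valuations together with the crash point `▽`
(`crash`) and the out-of-bounds point `△` (`oob`). -/
inductive Val where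
  | ok : ValHat → Val
  | crash : Val
  | oob : Val

/-- Measurable sets of `Val` are the sets whose trace on `Val̂` is measurable. -/
instance : MeasurableSpace Val := MeasurableSpace.map Val.ok inferInstance

/-- Choice sequences: binary streams that are `0` (`false`) at all but
finitely many indices. -/
def Cseq : Type := {c : ℕ → Bool // {n | c n = true}.Finite}

namespace Cseq

def head (C : Cseq) : Bool := C.1 0

def tail (C : Cseq) : Cseq :=
  ⟨fun n => C.1 (n + 1), by
    have h : {n | C.1 (n + 1) = true} = Nat.succ ⁻¹' {n | C.1 n = true} := rfl
    rw [h]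
    exact C.2.preimage Nat.succ_injective.injOn⟩

/-- `tail(n, C) := tailⁿ(C)`. -/
def tailN (n : ℕ) (C : Cseq) : Cseq := tail^[n] C

/-- `nat(C)`: the least position holding a `0`. -/
def nat (C : Cseq) : ℕ := sInf {p | C.1 p = false}

end Cseq

/-! ## Sample space -/

/-- The fixed sample space `(Ω, F, P)`, carrying a family of i.i.d.
uniform-`[0,1]` random variables. -/
structure SampleSpace where
  Ω : Type
  [mΩ : MeasurableSpace Ω]
  P : MeasureTheory.Measure Ω
  isProb : MeasureTheory.IsProbabilityMeasure P
  U : ℕ → Ω → ℝ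
  U_meas : ∀ n, Measurable (U n)
  U_unif : ∀ n, MeasureTheory.Measure.map (U n) P = MeasureTheory.volume.restrict (Set.Icc (0 : ℝ) 1)
  U_indep : ProbabilityTheory.iIndepFun U P

attribute [instance] SampleSpace.mΩ

/-! ## Syntax of the SDE-free language -/

mutual
/-- Terms: constants, variables, special 0-ary symbols `•_i` (used by
substitutions), sums, products, function symbols, definite descriptions. -/
inductive Term where
  | const : ℝ → Term
  | var : ℕ → Term
  | bullet : ℕ → Term
  | add : Term → Term → Term
  | mul : Term → Term → Term
  | func : (d : ℕ) → ℕ → (Fin d → Term) → Term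
  | iota : ℕ → Finset ℕ → Formula → Term

/-- Programs of the SDE-free fragment. -/
inductive Program where
  | assign : ℕ → Term → Program
  | sample : ℕ → Program
  | ite : Formula → Program → Program → Program
  | choice : Program → Program → Program
  | seq : Program → Program → Program
  | star : Program → Program
  | skip : Program
  | fail : Program
  | psym : ℕ → Program

/-- Formulas. -/
inductive Formula where
  | ge : Term → Term → Formula
  | not : Formula → Formula
  | and : Formula → Formula → Formula
  | pred : (d : ℕ) → ℕ → (Fin d → Term) → Formula
  | dia : Program → Formula → Formula
  | sure : Formula → Formula
end

/-! ## Interpretations -/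

/-- An interpretation: measurable meanings for function and predicate symbols,
values for the special symbols `•_i`, meanings for program symbols satisfying
the no-look-ahead and measurability conditions, and a countable set of
stop times `I_times ⊆ ℝ⁺`. -/
structure Interp (S : SampleSpace) where
  fn : ℕ → (d : ℕ) → (Fin d → Rbot) → Rbot
  fn_meas : ∀ name d, Measurable (fn name d)
  bullet : ℕ → Rbot
  pr : ℕ → (d : ℕ) → (Fin d → Rbot) → S.Ω → L
  pr_meas : ∀ name d, Measurable (Function.uncurry (pr name d))
  pg : ℕ → Val → S.Ω → Cseq → Val × Cseq
  pg_nla : ∀ name v ω C, ∃ n, (pg name v ω C).2 = Cseq.tailN n C ∧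
    ∀ C' : Cseq, (∀ k < n, C'.1 k = C.1 k) →
      (pg name v ω C').1 = (pg name v ω C).1 ∧ (pg name v ω C').2 = Cseq.tailN n C'
  pg_meas : ∀ name (z : S.Ω → Val), Measurable z → ∀ C,
    Measurable fun ω => (pg name (z ω) ω C).1
  times : Set ℝ
  times_cnt : times.Countable
  times_pos : ∀ t ∈ times, 0 ≤ t

/-! ## Semantics -/

mutual
/-- Term semantics `I𝐱⟦θ⟧ : Val̂ → ℝ_⊥`. -/
noncomputable def tSem (S : SampleSpace) (I : Interp S) : Term → ValHat → Rbot
  | .const c, _ => Rbot.real c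
  | .var x, v => v.1 x
  | .bullet i, _ => I.bullet i
  | .add θ κ, v => Rbot.add (tSem S I θ v) (tSem S I κ v)
  | .mul θ κ, v => Rbot.mul (tSem S I θ v) (tSem S I κ v)
  | .func d name ts, v => I.fn name d fun i => tSem S I (ts i) v
  | .iota i ds φ, v =>
      let can : ValHat → Rbot := fun u =>
        if h : ∃! y : ValHat, (∀ n, n ∉ ds → y.1 n = u.1 n) ∧
            ∀ ω : S.Ω, fSem S I φ y ω 0 = L.tru
        then h.choose.1 i else Rbot.bot
      if Measurable can then can v else Rbot.bot

/-- Program semantics `Iv⟦α⟧(ω, C) ∈ Val × 𝒞`, threading a counter used to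
pick never-before-used uniform random variables for `x := *`. -/
noncomputable def pSem (S : SampleSpace) (I : Interp S) :
    Program → Val → S.Ω → Cseq → ℕ → Val × Cseq × ℕ
  | _, .crash, _, C, n => (.crash, C, n)
  | _, .oob, _, C, n => (.oob, C, n)
  | .assign x θ, .ok v, _, C, n =>
      let r := tSem S I θ v
      if r = Rbot.bot then (.crash, C, n) else (.ok (v.update x r), C, n)
  | .sample x, .ok v, ω, C, n => (.ok (v.update x (Rbot.real (S.U n ω))), C, n + 1)
  | .ite H α β, .ok v, ω, C, n =>
      if fSem S I H v ω n = L.tru then pSem S I α (.ok v) ω C n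
      else if fSem S I H v ω n = L.fls then pSem S I β (.ok v) ω C n
      else (.crash, C, n)
  | .choice α β, .ok v, ω, C, n =>
      if C.head = false then pSem S I α (.ok v) ω C.tail n
      else pSem S I β (.ok v) ω C.tail n
  | .seq α β, .ok v, ω, C, n =>
      let r := pSem S I α (.ok v) ω C n
      pSem S I β r.1 ω r.2.1 r.2.2
  | .star α, .ok v, ω, C, n =>
      (Nat.rec (motive := fun _ => Val → Cseq → ℕ → Val × Cseq × ℕ)
        (fun u D m => (u, D, m))
        (fun _ ih u D m =>
          let r := pSem S I α u ω D m
          ih r.1 r.2.1 r.2.2)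
        C.nat) (.ok v) (Cseq.tailN C.nat C) n
  | .psym g, .ok v, ω, C, n => ((I.pg g (.ok v) ω C).1, (I.pg g (.ok v) ω C).2, n)
  | .skip, .ok v, _, C, n => (.ok v, C, n)
  | .fail, .ok _, _, C, n => (.crash, C, n)

/-- Formula semantics `Iv⟦φ⟧(ω) ∈ L` (with the freshness counter threaded). -/
noncomputable def fSem (S : SampleSpace) (I : Interp S) :
    Formula → ValHat → S.Ω → ℕ → L
  | .ge θ κ, v, _, _ =>
      let a := tSem S I θ v
      let b := tSem S I κ v
      if a = Rbot.bot ∨ b = Rbot.bot then L.ind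
      else if ∃ x y : ℝ, a = Rbot.real x ∧ b = Rbot.real y ∧ y ≤ x then L.tru
      else L.fls
  | .not φ, v, ω, n => L.neg (fSem S I φ v ω n)
  | .and φ ψ, v, ω, n => min (fSem S I φ v ω n) (fSem S I ψ v ω n)
  | .pred d name ts, v, ω, _ => I.pr name d (fun i => tSem S I (ts i) v) ω
  | .dia α φ, v, ω, n =>
      sSup {l : L | ∃ C : Cseq,
        (pSem S I α (.ok v) ω C n).1 ≠ Val.oob ∧
        l = (match pSem S I α (.ok v) ω C n with
             | (Val.ok w, _, m) => fSem S I φ w ω m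
             | _ => L.ind)}
  | .sure φ, v, ω, n => if fSem S I φ v ω n = L.tru then L.tru else L.fls
end

/-- `Iv⟦θ⟧` extended to `Val` by `I▽⟦θ⟧ = I△⟦θ⟧ = ⊥`. -/
noncomputable def termVal (S : SampleSpace) (I : Interp S) (θ : Term) : Val → Rbot
  | .ok v => tSem S I θ v
  | _ => Rbot.bot

/-- `Iv⟦φ⟧(ω)` extended to `Val` by `I▽⟦φ⟧(ω) = I△⟦φ⟧(ω) = ⊘`. -/
noncomputable def fmlVal (S : SampleSpace) (I : Interp S) (φ : Formula) :
    Val → S.Ω → L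
  | .ok v, ω => fSem S I φ v ω 0
  | _, _ => L.ind

/-- `Iv⟦α⟧(ω, C) ∈ Val × 𝒞`. -/
noncomputable def prgVal (S : SampleSpace) (I : Interp S) (α : Program)
    (v : Val) (ω : S.Ω) (C : Cseq) : Val × Cseq :=
  ((pSem S I α v ω C 0).1, (pSem S I α v ω C 0).2.1)

/-! ## Expressions and subexpressions -/

/-- An expression: a term, a program, or a formula. -/
inductive Expr where
  | trm : Term → Expr
  | prg : Program → Expr
  | fml : Formula → Expr

/-- The immediate-subexpression relation. -/
inductive ImmSub : Expr → Expr → Prop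
  | addL (θ κ : Term) : ImmSub (.trm θ) (.trm (.add θ κ))
  | addR (θ κ : Term) : ImmSub (.trm κ) (.trm (.add θ κ))
  | mulL (θ κ : Term) : ImmSub (.trm θ) (.trm (.mul θ κ))
  | mulR (θ κ : Term) : ImmSub (.trm κ) (.trm (.mul θ κ))
  | funcArg (d name : ℕ) (ts : Fin d → Term) (i : Fin d) :
      ImmSub (.trm (ts i)) (.trm (.func d name ts))
  | iotaBody (i : ℕ) (ds : Finset ℕ) (φ : Formula) :
      ImmSub (.fml φ) (.trm (.iota i ds φ))
  | assignT (x : ℕ) (θ : Term) : ImmSub (.trm θ) (.prg (.assign x θ))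
  | iteH (H : Formula) (α β : Program) : ImmSub (.fml H) (.prg (.ite H α β))
  | iteL (H : Formula) (α β : Program) : ImmSub (.prg α) (.prg (.ite H α β))
  | iteR (H : Formula) (α β : Program) : ImmSub (.prg β) (.prg (.ite H α β))
  | choiceL (α β : Program) : ImmSub (.prg α) (.prg (.choice α β))
  | choiceR (α β : Program) : ImmSub (.prg β) (.prg (.choice α β))
  | seqL (α β : Program) : ImmSub (.prg α) (.prg (.seq α β))
  | seqR (α β : Program) : ImmSub (.prg β) (.prg (.seq α β))
  | starBody (α : Program) : ImmSub (.prg α) (.prg (.star α))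
  | geL (θ κ : Term) : ImmSub (.trm θ) (.fml (.ge θ κ))
  | geR (θ κ : Term) : ImmSub (.trm κ) (.fml (.ge θ κ))
  | notBody (φ : Formula) : ImmSub (.fml φ) (.fml (.not φ))
  | andL (φ ψ : Formula) : ImmSub (.fml φ) (.fml (.and φ ψ))
  | andR (φ ψ : Formula) : ImmSub (.fml ψ) (.fml (.and φ ψ))
  | predArg (d name : ℕ) (ts : Fin d → Term) (i : Fin d) :
      ImmSub (.trm (ts i)) (.fml (.pred d name ts))
  | diaProg (α : Program) (φ : Formula) : ImmSub (.prg α) (.fml (.dia α φ))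
  | diaBody (α : Program) (φ : Formula) : ImmSub (.fml φ) (.fml (.dia α φ))
  | sureBody (φ : Formula) : ImmSub (.fml φ) (.fml (.sure φ))

/-- `Subexpr a b`: `a` is a (reflexive-transitive) subexpression of `b`. -/
def Subexpr (a b : Expr) : Prop := Relation.ReflTransGen ImmSub a b

/-- A formula contains no program as a subexpression. -/
def ProgFree (φ : Formula) : Prop := ∀ α : Program, ¬ Subexpr (.prg α) (.fml φ)

/-- A formula contains no formula (predicate) symbol as a subexpression. -/
def PredFree (φ : Formula) : Prop :=
  ∀ (d name : ℕ) (ts : Fin d → Term), ¬ Subexpr (.fml (.pred d name ts)) (.fml φ)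

/-- Well-formedness of an expression of the SDE-free language: bodies of
definite descriptions contain no programs and no formula symbols, and the
tests of conditionals contain no programs. -/
def ExprWF (e : Expr) : Prop :=
  (∀ (i : ℕ) (ds : Finset ℕ) (φ : Formula),
      Subexpr (.trm (.iota i ds φ)) e → ProgFree φ ∧ PredFree φ) ∧
  (∀ (H : Formula) (α β : Program),
      Subexpr (.prg (.ite H α β)) e → ProgFree H)

abbrev Term.WF (θ : Term) : Prop := ExprWF (.trm θ)
abbrev Program.WF (α : Program) : Prop := ExprWF (.prg α)
abbrev Formula.WF (φ : Formula) : Prop := ExprWF (.fml φ)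

/-! ## Derived connectives -/

namespace Formula

/-- `φ ∨ ψ := ¬(¬φ ∧ ¬ψ)`. -/
def or (φ ψ : Formula) : Formula := .not (.and (.not φ) (.not ψ))

/-- `ind(φ) := ¬sure(φ) ∧ ¬sure(¬φ)`. -/
def indF (φ : Formula) : Formula := .and (.not (.sure φ)) (.not (.sure (.not φ)))

/-- `φ₁ → φ₂ := ¬φ₁ ∨ φ₂ ∨ (ind(φ₁) ∧ ind(φ₂))`. -/
def imp (φ ψ : Formula) : Formula := or (or (.not φ) ψ) (.and (indF φ) (indF ψ))

/-- `φ₁ ↔ φ₂ := (φ₁ → φ₂) ∧ (φ₂ → φ₁)`. -/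
def iff (φ ψ : Formula) : Formula := .and (imp φ ψ) (imp ψ φ)

/-- `[α]φ := ¬⟨α⟩¬φ`. -/
def box (α : Program) (φ : Formula) : Formula := .not (.dia α (.not φ))

/-- `crash(α) := ind([α] 0 ≥ 0)`. -/
def crashF (α : Program) : Formula := indF (box α (.ge (.const 0) (.const 0)))

end Formula

/-! ## Pathwise validity -/

/-- `T ⊨ φ`: φ holds at every interpretation whose stop times are `T`,
every valuation in `Val̂`, and every `ω`. -/
def Sat (S : SampleSpace) (T : Set ℝ) (φ : Formula) : Prop :=
  ∀ I : Interp S, I.times = T → ∀ (v : ValHat) (ω : S.Ω), fSem S I φ v ω 0 = L.tru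

/-- `T ⊩⊩ φ`: every countable stop-time set `T′ ⊇ T` satisfies `T′ ⊨ φ`. -/
def Validates (S : SampleSpace) (T : Set ℝ) (φ : Formula) : Prop :=
  ∀ T' : Set ℝ, T'.Countable → (∀ t ∈ T', 0 ≤ t) → T ⊆ T' → Sat S T' φ

/-- φ is pathwise valid iff some countable set of stop times validates it. -/
def PathwiseValid (S : SampleSpace) (φ : Formula) : Prop :=
  ∃ T : Set ℝ, T.Countable ∧ (∀ t ∈ T, 0 ≤ t) ∧ Validates S T φ

end

/-! Every choice sequence is `b :: C`, and `α ∪ β` run on `b :: C` is `α` (if `b = 0`) or `β`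
(if `b = 1`) run on `C`. Hence the values over which `⟨α ∪ β⟩φ` takes its supremum are the union
of those of `⟨α⟩φ` and `⟨β⟩φ`, and a supremum over a union is the maximum. The three-valued `↔`
evaluates to `⊕` whenever both sides have the same value. -/

noncomputable section

namespace Cseq

def cons (b : Bool) (C : Cseq) : Cseq :=
  ⟨fun n => match n with | 0 => b | n + 1 => C.1 n, by
    apply ((C.2.image Nat.succ).union (Set.finite_singleton 0)).subset
    intro n hn
    match n with
    | 0 => exact Or.inr rfl
    | n + 1 => exact Or.inl ⟨n, hn, rfl⟩⟩

@[simp] lemma head_cons (b : Bool) (C : Cseq) : (cons b C).head = b := rfl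

@[simp] lemma tail_cons (b : Bool) (C : Cseq) : (cons b C).tail = C := rfl

lemma cons_head_tail (C : Cseq) : cons C.head C.tail = C :=
  Subtype.ext <| funext fun n => by cases n <;> rfl

lemma exists_iff_exists_cons {p : Cseq → Prop} : (∃ C, p C) ↔ ∃ b C, p (cons b C) :=
  ⟨fun ⟨C, hC⟩ => ⟨C.head, C.tail, by rwa [cons_head_tail]⟩, fun ⟨_, C, hC⟩ => ⟨_, hC⟩⟩

end Cseq

lemma L.eq_fls_or_eq_ind_or_eq_tru (a : L) : a = L.fls ∨ a = L.ind ∨ a = L.tru := by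
  revert a; decide

lemma L.neg_min_neg (a b : L) : L.neg (min (L.neg a) (L.neg b)) = max a b := by
  revert a b; decide

section Semantics

variable (S : SampleSpace) (I : Interp S)

lemma pSem_choice_cons (α β : Program) (v : ValHat) (ω : S.Ω) (b : Bool) (C : Cseq) (n : ℕ) :
    pSem S I (.choice α β) (.ok v) ω (Cseq.cons b C) n = pSem S I (cond b β α) (.ok v) ω C n := by
  cases b <;> simp [pSem]

def diaValues (α : Program) (φ : Formula) (v : ValHat) (ω : S.Ω) (n : ℕ) : Set L :=
  {l | ∃ C : Cseq, (pSem S I α (.ok v) ω C n).1 ≠ Val.oob ∧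
    l = (match pSem S I α (.ok v) ω C n with
         | (Val.ok w, _, m) => fSem S I φ w ω m
         | _ => L.ind)}

lemma fSem_dia (α : Program) (φ : Formula) (v : ValHat) (ω : S.Ω) (n : ℕ) :
    fSem S I (.dia α φ) v ω n = sSup (diaValues S I α φ v ω n) := by
  simp only [fSem]; rfl

lemma diaValues_choice (α β : Program) (φ : Formula) (v : ValHat) (ω : S.Ω) (n : ℕ) :
    diaValues S I (.choice α β) φ v ω n = diaValues S I α φ v ω n ∪ diaValues S I β φ v ω n := by
  ext l
  simp only [diaValues, Set.mem_ofPred_eq, Set.mem_union]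
  rw [Cseq.exists_iff_exists_cons]
  simp only [pSem_choice_cons, Bool.exists_bool, cond_false, cond_true]

lemma fSem_dia_choice (α β : Program) (φ : Formula) (v : ValHat) (ω : S.Ω) (n : ℕ) :
    fSem S I (.dia (.choice α β) φ) v ω n =
      max (fSem S I (.dia α φ) v ω n) (fSem S I (.dia β φ) v ω n) := by
  rw [fSem_dia, fSem_dia, fSem_dia, diaValues_choice, sSup_union]

lemma fmlVal_dia_choice (α β : Program) (φ : Formula) (v : Val) (ω : S.Ω) :
    fmlVal S I (.dia (.choice α β) φ) v ω =
      max (fmlVal S I (.dia α φ) v ω) (fmlVal S I (.dia β φ) v ω) := by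
  cases v with
  | ok v => exact fSem_dia_choice S I α β φ v ω 0
  | crash | oob => exact (max_self _).symm

lemma fSem_or (φ ψ : Formula) (v : ValHat) (ω : S.Ω) (n : ℕ) :
    fSem S I (Formula.or φ ψ) v ω n = max (fSem S I φ v ω n) (fSem S I ψ v ω n) := by
  simp only [Formula.or, fSem, L.neg_min_neg]

lemma fSem_iff_of_eq {φ ψ : Formula} {v : ValHat} {ω : S.Ω} {n : ℕ}
    (h : fSem S I φ v ω n = fSem S I ψ v ω n) : fSem S I (Formula.iff φ ψ) v ω n = L.tru := by
  obtain ha | ha | ha := L.eq_fls_or_eq_ind_or_eq_tru (fSem S I ψ v ω n)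
  all_goals
    simp only [Formula.iff, Formula.imp, Formula.or, Formula.indF, fSem, h, ha]
    decide

end Semantics

/-- **Soundness of the nondeterministic choice axiom.**
`Iv⟦⟨α ∪ β⟩φ⟧(ω) = max(Iv⟦⟨α⟩φ⟧(ω), Iv⟦⟨β⟩φ⟧(ω))` for every `v ∈ Val`, and
the axiom `⟨α ∪ β⟩φ ↔ ⟨α⟩φ ∨ ⟨β⟩φ` evaluates to `⊕` at every `v ∈ Val̂`. -/
theorem choice_axiom_sound (S : SampleSpace) (I : Interp S)
    (α β : Program) (hα : α.WF) (hβ : β.WF) (φ : Formula) (hφ : φ.WF) :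
    (∀ (v : Val) (ω : S.Ω),
      fmlVal S I (.dia (.choice α β) φ) v ω =
        max (fmlVal S I (.dia α φ) v ω) (fmlVal S I (.dia β φ) v ω)) ∧
    (∀ (v : ValHat) (ω : S.Ω),
      fSem S I (Formula.iff (.dia (.choice α β) φ)
        (Formula.or (.dia α φ) (.dia β φ))) v ω 0 = L.tru) :=
  ⟨fmlVal_dia_choice S I α β φ, fun v ω =>
    fSem_iff_of_eq S I (by rw [fSem_or, fSem_dia_choice])⟩

end
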